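/- For π ⊢ [n], the crossing number satisfies crs(π) = n² ∫_{Δ²} 1[x₁<x₂<y₁<y₂] dμ_π(x₁,y₁) dμ_π(x₂,y₂) − (1/4)d(π) − (1/2)·#{adjacent pairs of arcs of π}, where a pair of arcs (i,j),(k,l) is adjacent if j = k. -/

import Mathlib

/-!
`μ_π ⊗ μ_π` is `n²` times the sum over pairs of arcs `p, q` of Lebesgue measure on
`A_p × A_q`, so the integral is `n² ∑ vol({x₁ < x₂ < y₁ < y₂} ∩ A_p × A_q)`. Up to null
boundaries the squares are products of open cells; two coordinates lying in different cells are
ordered by their cells, and only coordinates sharing a cell compete, each such pair contributing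
a factor `1/2`. Since an arc is determined by either endpoint, a pair of arcs contributes
`n⁻⁴` if it crosses, `n⁻⁴/2` if it is adjacent, `n⁻⁴/4` if `p = q`, and nothing otherwise.
-/

open scoped BigOperators
open Finset Classical

/-- Two indices lie in the same block of the set partition `P` of `[n]`. -/
def SameBlock {n : ℕ} (P : Finpartition (Finset.univ : Finset (Fin n))) (i j : Fin n) : Prop :=
  ∃ B ∈ P.parts, i ∈ B ∧ j ∈ B

/-- `(i,j)` is an arc of `P`: same block, `i < j`, no element of that block strictly between. -/
def IsArc {n : ℕ} (P : Finpartition (Finset.univ : Finset (Fin n))) (i j : Fin n) : Prop :=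
  i < j ∧ SameBlock P i j ∧ ∀ k : Fin n, i < k → k < j → ¬ SameBlock P i k

/-- The set of arcs `D(π)`. -/
noncomputable def arcs {n : ℕ} (P : Finpartition (Finset.univ : Finset (Fin n))) :
    Finset (Fin n × Fin n) :=
  Finset.univ.filter (fun p => IsArc P p.1 p.2)

/-- `d(π)`, the number of arcs. -/
noncomputable def dP {n : ℕ} (P : Finpartition (Finset.univ : Finset (Fin n))) : ℕ :=
  (arcs P).card

/-- `dim(π) = Σ_{(i,j) ∈ D(π)} (j - i)`. -/
noncomputable def dimP {n : ℕ} (P : Finpartition (Finset.univ : Finset (Fin n))) : ℕ :=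
  ∑ p ∈ arcs P, (p.2.val - p.1.val)

/-- `crs(π)`, the number of crossings, i.e. pairs of arcs `(i,j), (k,l)` with `i<k<j<l`. -/
noncomputable def crsP {n : ℕ} (P : Finpartition (Finset.univ : Finset (Fin n))) : ℕ :=
  (((arcs P) ×ˢ (arcs P)).filter
    (fun q => q.1.1 < q.2.1 ∧ q.2.1 < q.1.2 ∧ q.1.2 < q.2.2)).card

/-- `(i,j)` is a `π`-singular pair. -/
def SingularPair {n : ℕ} (P : Finpartition (Finset.univ : Finset (Fin n))) (i j : Fin n) : Prop :=
  i < j ∧ ((∃ k : Fin n, k < i ∧ IsArc P k j) ∨ (∃ l : Fin n, j < l ∧ IsArc P i l))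

/-- `(i,j)` is a `π`-regular pair. -/
def RegularPair {n : ℕ} (P : Finpartition (Finset.univ : Finset (Fin n))) (i j : Fin n) : Prop :=
  i < j ∧ ¬ ((∃ k : Fin n, k < i ∧ IsArc P k j) ∨ (∃ l : Fin n, j < l ∧ IsArc P i l))

/-- The set `Sing(π)` of singular pairs. -/
noncomputable def singP {n : ℕ} (P : Finpartition (Finset.univ : Finset (Fin n))) :
    Finset (Fin n × Fin n) :=
  Finset.univ.filter (fun p => SingularPair P p.1 p.2)

/-- The set `reg(π)` of regular pairs. -/
noncomputable def regP {n : ℕ} (P : Finpartition (Finset.univ : Finset (Fin n))) :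
    Finset (Fin n × Fin n) :=
  Finset.univ.filter (fun p => RegularPair P p.1 p.2)

open MeasureTheory

/-- The square `A_{i,j} = [(i−1)/n, i/n] × [(j−1)/n, j/n]` (0-indexed: `p.1 = i−1`). -/
noncomputable def sqA (n : ℕ) (p : Fin n × Fin n) : Set (ℝ × ℝ) :=
  Set.Icc ((p.1 : ℝ) / n) (((p.1 : ℝ) + 1) / n) ×ˢ
    Set.Icc ((p.2 : ℝ) / n) (((p.2 : ℝ) + 1) / n)

/-- The measure `μ_π = (1/n) Σ_{(i,j)∈D(π)} λ_{A_{i,j}}`. -/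
noncomputable def muPi {n : ℕ} (P : Finpartition (Finset.univ : Finset (Fin n))) :
    Measure (ℝ × ℝ) :=
  (n : ENNReal) • ∑ p ∈ arcs P, volume.restrict (sqA n p)

/-- Number of (ordered, hence unordered) adjacent pairs of arcs `(i,j),(k,l)` with `j = k`. -/
noncomputable def adjP {n : ℕ} (P : Finpartition (Finset.univ : Finset (Fin n))) : ℕ :=
  (((arcs P) ×ˢ (arcs P)).filter (fun q => q.1.2 = q.2.1)).card

open Set

namespace MeasureTheory.Measure

variable {α β ι κ : Type*} [MeasurableSpace α] [MeasurableSpace β]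

theorem prod_finsetSum (μ : Measure α) [IsFiniteMeasure μ] (t : Finset κ) (ν : κ → Measure β)
    [∀ j, IsFiniteMeasure (ν j)] : μ.prod (∑ j ∈ t, ν j) = ∑ j ∈ t, μ.prod (ν j) := by
  induction t using Finset.induction_on with
  | empty => simp
  | insert j t hj ih => rw [Finset.sum_insert hj, prod_add, ih, Finset.sum_insert hj]

theorem finsetSum_prod_finsetSum (s : Finset ι) (t : Finset κ) (μ : ι → Measure α)
    (ν : κ → Measure β) [∀ i, IsFiniteMeasure (μ i)] [∀ j, IsFiniteMeasure (ν j)] :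
    (∑ i ∈ s, μ i).prod (∑ j ∈ t, ν j) = ∑ i ∈ s, ∑ j ∈ t, (μ i).prod (ν j) := by
  induction s using Finset.induction_on with
  | empty => simp
  | insert i s hi ih =>
    rw [Finset.sum_insert hi, add_prod, ih, Finset.sum_insert hi, prod_finsetSum]

end MeasureTheory.Measure

def crossingRegion : Set ((ℝ × ℝ) × (ℝ × ℝ)) :=
  {q | q.1.1 < q.2.1 ∧ q.2.1 < q.1.2 ∧ q.1.2 < q.2.2}

theorem measurableSet_crossingRegion : MeasurableSet crossingRegion :=
  (measurableSet_lt measurable_fst.fst measurable_snd.fst).inter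
    ((measurableSet_lt measurable_snd.fst measurable_fst.snd).inter
      (measurableSet_lt measurable_fst.snd measurable_snd.snd))

theorem volume_crossingRegion_inter_prod {I₁ J₁ I₂ J₂ : Set ℝ} :
    volume (crossingRegion ∩ ((I₁ ×ˢ J₁) ×ˢ (I₂ ×ˢ J₂))) =
      ∫⁻ x in I₁, ∫⁻ y in J₁, volume (Ioo x y ∩ I₂) * volume (Ioi y ∩ J₂) := by
  have hslice : ∀ z : ℝ × ℝ, Prod.mk z ⁻¹' crossingRegion ∩ I₂ ×ˢ J₂ =
      (Ioo z.1 z.2 ∩ I₂) ×ˢ (Ioi z.2 ∩ J₂) := by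
    intro z
    ext w
    simp only [crossingRegion, Set.mem_inter_iff, Set.mem_preimage, Set.mem_ofPred, Set.mem_prod,
      Set.mem_Ioo, Set.mem_Ioi]
    tauto
  rw [Measure.volume_eq_prod, ← Measure.restrict_apply measurableSet_crossingRegion,
    ← Measure.prod_restrict, Measure.prod_apply measurableSet_crossingRegion,
    Measure.volume_eq_prod, ← Measure.prod_restrict,
    lintegral_prod _ (measurable_measure_prodMk_left measurableSet_crossingRegion).aemeasurable]
  refine lintegral_congr fun x => lintegral_congr fun y => ?_
  rw [Measure.restrict_apply (measurable_prodMk_left measurableSet_crossingRegion), hslice,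
    Measure.prod_prod]

theorem volume_crossingRegion_inter_Ioo (a₁ b₁ c₁ d₁ a₂ b₂ c₂ d₂ : ℝ) :
    volume (crossingRegion ∩ ((Ioo a₁ b₁ ×ˢ Ioo c₁ d₁) ×ˢ (Ioo a₂ b₂ ×ˢ Ioo c₂ d₂))) =
      ∫⁻ x in Ioo a₁ b₁, ∫⁻ y in Ioo c₁ d₁,
        ENNReal.ofReal (min y b₂ - max x a₂) * ENNReal.ofReal (d₂ - max y c₂) := by
  rw [volume_crossingRegion_inter_prod]
  refine lintegral_congr fun x => lintegral_congr fun y => ?_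
  rw [Ioo_inter_Ioo, Real.volume_Ioo, ← Ioi_inter_Iio (a := c₂), ← inter_assoc, Ioi_inter_Ioi,
    Ioi_inter_Iio, Real.volume_Ioo]

theorem setLIntegral_Ioo_ofReal_sub_left {a b : ℝ} (hab : a ≤ b) :
    ∫⁻ x in Ioo a b, ENNReal.ofReal (x - a) = ENNReal.ofReal ((b - a) ^ 2 / 2) := by
  rw [← ofReal_integral_eq_lintegral_ofReal (f := fun x => x - a)
    ((Continuous.integrableOn_Icc (by fun_prop)).mono_set Set.Ioo_subset_Icc_self)
    ((ae_restrict_mem measurableSet_Ioo).mono fun x hx => sub_nonneg.2 hx.1.le),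
    ← integral_Ioc_eq_integral_Ioo, ← intervalIntegral.integral_of_le hab]
  simp only [intervalIntegral.integral_sub intervalIntegral.intervalIntegrable_id
    intervalIntegrable_const, integral_id, intervalIntegral.integral_const, smul_eq_mul]
  congr 1
  ring

theorem setLIntegral_Ioo_ofReal_sub_right {a b : ℝ} (hab : a ≤ b) :
    ∫⁻ x in Ioo a b, ENNReal.ofReal (b - x) = ENNReal.ofReal ((b - a) ^ 2 / 2) := by
  rw [← ofReal_integral_eq_lintegral_ofReal (f := fun x => b - x)
    ((Continuous.integrableOn_Icc (by fun_prop)).mono_set Set.Ioo_subset_Icc_self)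
    ((ae_restrict_mem measurableSet_Ioo).mono fun x hx => sub_nonneg.2 hx.2.le),
    ← integral_Ioc_eq_integral_Ioo, ← intervalIntegral.integral_of_le hab]
  simp only [intervalIntegral.integral_sub intervalIntegrable_const
    intervalIntegral.intervalIntegrable_id, integral_id, intervalIntegral.integral_const,
    smul_eq_mul]
  congr 1
  ring

section CrossingVolume

variable {a₁ b₁ c₁ d₁ a₂ b₂ c₂ d₂ : ℝ}

theorem volume_crossingRegion_inter_Ioo_of_crossing (h₁ : b₁ ≤ a₂) (h₂ : b₂ ≤ c₁)
    (h₃ : d₁ ≤ c₂) :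
    volume (crossingRegion ∩ ((Ioo a₁ b₁ ×ˢ Ioo c₁ d₁) ×ˢ (Ioo a₂ b₂ ×ˢ Ioo c₂ d₂))) =
      ENNReal.ofReal (b₁ - a₁) * ENNReal.ofReal (d₁ - c₁) *
        (ENNReal.ofReal (b₂ - a₂) * ENNReal.ofReal (d₂ - c₂)) := by
  rw [volume_crossingRegion_inter_Ioo]
  calc _ = ∫⁻ _ in Ioo a₁ b₁, ∫⁻ _ in Ioo c₁ d₁,
        ENNReal.ofReal (b₂ - a₂) * ENNReal.ofReal (d₂ - c₂) := by
        refine setLIntegral_congr_fun measurableSet_Ioo fun x hx =>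
          setLIntegral_congr_fun measurableSet_Ioo fun y hy => ?_
        rw [min_eq_right (h₂.trans hy.1.le), max_eq_right (hx.2.le.trans h₁),
          max_eq_right (hy.2.le.trans h₃)]
    _ = _ := by simp only [setLIntegral_const, Real.volume_Ioo]; ring

theorem volume_crossingRegion_inter_Ioo_of_diag (h : b₁ ≤ c₁) (ha : a₁ ≤ b₁) (hc : c₁ ≤ d₁) :
    volume (crossingRegion ∩ ((Ioo a₁ b₁ ×ˢ Ioo c₁ d₁) ×ˢ (Ioo a₁ b₁ ×ˢ Ioo c₁ d₁))) =
      ENNReal.ofReal ((b₁ - a₁) ^ 2 / 2) * ENNReal.ofReal ((d₁ - c₁) ^ 2 / 2) := by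
  rw [volume_crossingRegion_inter_Ioo]
  calc _ = ∫⁻ x in Ioo a₁ b₁, ∫⁻ y in Ioo c₁ d₁,
        ENNReal.ofReal (b₁ - x) * ENNReal.ofReal (d₁ - y) := by
        refine setLIntegral_congr_fun measurableSet_Ioo fun x hx =>
          setLIntegral_congr_fun measurableSet_Ioo fun y hy => ?_
        rw [min_eq_right (h.trans hy.1.le), max_eq_left hx.1.le, max_eq_left hy.1.le]
    _ = _ := by
      rw [lintegral_lintegral_mul (by fun_prop) (by fun_prop),
        setLIntegral_Ioo_ofReal_sub_right ha, setLIntegral_Ioo_ofReal_sub_right hc]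

theorem volume_crossingRegion_inter_Ioo_of_adjacent (h₁ : b₁ ≤ c₁) (h₂ : d₁ ≤ c₂)
    (hc : c₁ ≤ d₁) :
    volume (crossingRegion ∩ ((Ioo a₁ b₁ ×ˢ Ioo c₁ d₁) ×ˢ (Ioo c₁ d₁ ×ˢ Ioo c₂ d₂))) =
      ENNReal.ofReal (b₁ - a₁) * ENNReal.ofReal ((d₁ - c₁) ^ 2 / 2) *
        ENNReal.ofReal (d₂ - c₂) := by
  rw [volume_crossingRegion_inter_Ioo]
  calc _ = ∫⁻ _ in Ioo a₁ b₁, ∫⁻ y in Ioo c₁ d₁,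
        ENNReal.ofReal (y - c₁) * ENNReal.ofReal (d₂ - c₂) := by
        refine setLIntegral_congr_fun measurableSet_Ioo fun x hx =>
          setLIntegral_congr_fun measurableSet_Ioo fun y hy => ?_
        rw [min_eq_left hy.2.le, max_eq_right (hx.2.le.trans h₁),
          max_eq_right (hy.2.le.trans h₂)]
    _ = _ := by
      rw [lintegral_mul_const _ (by fun_prop), setLIntegral_Ioo_ofReal_sub_left hc,
        setLIntegral_const, Real.volume_Ioo]
      ring

theorem volume_crossingRegion_inter_Ioo_eq_zero (h : b₂ ≤ a₁ ∨ d₁ ≤ a₂ ∨ d₂ ≤ c₁) :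
    volume (crossingRegion ∩ ((Ioo a₁ b₁ ×ˢ Ioo c₁ d₁) ×ˢ (Ioo a₂ b₂ ×ˢ Ioo c₂ d₂))) = 0 := by
  refine measure_mono_null (fun ⟨⟨x₁, y₁⟩, ⟨x₂, y₂⟩⟩ ⟨hS, hbox⟩ => ?_) measure_empty
  simp only [crossingRegion, Set.mem_ofPred, Set.mem_prod, Set.mem_Ioo] at hS hbox
  rcases h with h | h | h <;> linarith [hS.1, hS.2.1, hS.2.2, hbox.1.1.1, hbox.1.2.2,
    hbox.2.1.1, hbox.2.1.2, hbox.2.2.2]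

end CrossingVolume

section Arcs

variable {n : ℕ} {P : Finpartition (Finset.univ : Finset (Fin n))}

theorem SameBlock.trans_symm {i j k : Fin n} (hij : SameBlock P i j) (hkj : SameBlock P k j) :
    SameBlock P i k := by
  obtain ⟨B, hB, hiB, hjB⟩ := hij
  obtain ⟨C, hC, hkC, hjC⟩ := hkj
  exact ⟨B, hB, hiB, P.eq_of_mem_parts hB hC hjB hjC ▸ hkC⟩

theorem IsArc.right_unique {i j l : Fin n} (hj : IsArc P i j) (hl : IsArc P i l) : j = l := by
  rcases lt_trichotomy j l with h | h | h
  · exact absurd hj.2.1 (hl.2.2 j hj.1 h)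
  · exact h
  · exact absurd hl.2.1 (hj.2.2 l hl.1 h)

theorem IsArc.left_unique {i k j : Fin n} (hi : IsArc P i j) (hk : IsArc P k j) : i = k := by
  rcases lt_trichotomy i k with h | h | h
  · exact absurd (hi.2.1.trans_symm hk.2.1) (hi.2.2 k h hk.1)
  · exact h
  · exact absurd (hk.2.1.trans_symm hi.2.1) (hk.2.2 i h hi.1)

end Arcs

noncomputable def arcPairWeight {n : ℕ} (p q : Fin n × Fin n) : ℝ :=
  (if p.1 < q.1 ∧ q.1 < p.2 ∧ p.2 < q.2 then 1 else 0) + (if p.2 = q.1 then 1 / 2 else 0) +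
    (if p = q then 1 / 4 else 0)

theorem sum_arcPairWeight {n : ℕ} (P : Finpartition (Finset.univ : Finset (Fin n))) :
    ∑ x ∈ arcs P ×ˢ arcs P, arcPairWeight x.1 x.2 =
      (crsP P : ℝ) + (adjP P : ℝ) / 2 + (dP P : ℝ) / 4 := by
  simp only [arcPairWeight, Finset.sum_add_distrib, ← Finset.sum_filter, Finset.sum_const,
    nsmul_eq_mul, crsP, adjP, dP, ← Finset.diag_eq_filter, Finset.diag_card]
  ring

def openCell (n : ℕ) (a : Fin n) : Set ℝ := Ioo ((a : ℝ) / n) (((a : ℝ) + 1) / n)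

section Cells

variable {n : ℕ}

instance (p : Fin n × Fin n) : IsFiniteMeasure (volume.restrict (sqA n p)) :=
  isFiniteMeasure_restrict.2 ((isCompact_Icc.prod isCompact_Icc).measure_lt_top).ne

theorem sqA_ae_eq (p : Fin n × Fin n) :
    sqA n p =ᵐ[volume] openCell n p.1 ×ˢ openCell n p.2 :=
  (Measure.set_prod_ae_eq Ioo_ae_eq_Icc Ioo_ae_eq_Icc).symm

theorem cell_right_le_left {a b : Fin n} (h : a < b) : ((a : ℝ) + 1) / n ≤ b / n := by
  gcongr
  exact_mod_cast Nat.succ_le_of_lt h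

theorem cell_left_le_right (a : Fin n) : (a : ℝ) / n ≤ ((a : ℝ) + 1) / n := by
  gcongr
  linarith

theorem cell_length (a : Fin n) : ((a : ℝ) + 1) / n - a / n = 1 / n := by ring

end Cells

theorem muPi_prod_muPi_apply {n : ℕ} (P : Finpartition (Finset.univ : Finset (Fin n)))
    {s : Set ((ℝ × ℝ) × (ℝ × ℝ))} (hs : MeasurableSet s) :
    (muPi P).prod (muPi P) s =
      n * n * ∑ x ∈ arcs P ×ˢ arcs P, volume (s ∩ (sqA n x.1 ×ˢ sqA n x.2)) := by
  rw [muPi, Measure.prod_smul_left, Measure.prod_smul_right, Measure.finsetSum_prod_finsetSum,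
    Measure.smul_apply, Measure.smul_apply, Measure.finsetSum_apply, Finset.sum_product,
    smul_eq_mul, smul_eq_mul, mul_assoc]
  simp only [Measure.finsetSum_apply, Measure.prod_restrict, Measure.restrict_apply hs,
    Measure.volume_eq_prod]

theorem volume_crossingRegion_inter_openCell {n : ℕ} {i j k l : Fin n} (hij : i < j)
    (hkl : k < l) (hleft : i = k → j = l) (hright : j = l → i = k) :
    volume (crossingRegion ∩ ((openCell n i ×ˢ openCell n j) ×ˢ (openCell n k ×ˢ openCell n l))) =
      ENNReal.ofReal (arcPairWeight (i, j) (k, l) / n ^ 4) := by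
  simp only [openCell]
  rcases lt_trichotomy k j with hkj | rfl | hjk
  · rcases lt_trichotomy i k with hik | rfl | hki
    · rcases lt_trichotomy j l with hjl | rfl | hlj
      · rw [volume_crossingRegion_inter_Ioo_of_crossing (cell_right_le_left hik)
          (cell_right_le_left hkj) (cell_right_le_left hjl)]
        simp only [cell_length, arcPairWeight, Prod.mk.injEq, hik, hkj, hjl, hkj.ne', hik.ne,
          and_self, false_and, if_true, if_false]
        rw [← ENNReal.ofReal_mul (by positivity), ← ENNReal.ofReal_mul (by positivity)]
        congr 1
        ring
      · exact absurd (hright rfl) hik.ne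
      · rw [volume_crossingRegion_inter_Ioo_eq_zero (Or.inr (Or.inr (cell_right_le_left hlj)))]
        simp [arcPairWeight, hlj.not_gt, hkj.ne', hlj.ne']
    · obtain rfl := hleft rfl
      rw [volume_crossingRegion_inter_Ioo_of_diag (cell_right_le_left hij)
        (cell_left_le_right i) (cell_left_le_right j)]
      simp only [cell_length, arcPairWeight, hkj.ne', lt_irrefl, and_false, if_false, if_true]
      rw [← ENNReal.ofReal_mul (by positivity)]
      congr 1
      ring
    · rw [volume_crossingRegion_inter_Ioo_eq_zero (Or.inl (cell_right_le_left hki))]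
      simp [arcPairWeight, hki.not_gt, hki.ne', (hki.trans hij).ne']
  · rw [volume_crossingRegion_inter_Ioo_of_adjacent (cell_right_le_left hij)
      (cell_right_le_left hkl) (cell_left_le_right k)]
    simp only [cell_length, arcPairWeight, lt_irrefl, and_false, false_and, if_false, if_true,
      Prod.mk.injEq, hij.ne]
    rw [← ENNReal.ofReal_mul (by positivity), ← ENNReal.ofReal_mul (by positivity)]
    congr 1
    ring
  · rw [volume_crossingRegion_inter_Ioo_eq_zero (Or.inr (Or.inl (cell_right_le_left hjk)))]
    simp [arcPairWeight, hjk.not_gt, hjk.ne, (hij.trans hjk).ne]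

theorem volume_crossingRegion_inter_sqA {n : ℕ} {P : Finpartition (Finset.univ : Finset (Fin n))}
    {p q : Fin n × Fin n} (hp : p ∈ arcs P) (hq : q ∈ arcs P) :
    volume (crossingRegion ∩ (sqA n p ×ˢ sqA n q)) =
      ENNReal.ofReal (arcPairWeight p q / n ^ 4) := by
  have hp' : IsArc P p.1 p.2 := (Finset.mem_filter.mp hp).2
  have hq' : IsArc P q.1 q.2 := (Finset.mem_filter.mp hq).2
  rw [measure_congr (μ := volume) ((ae_eq_refl crossingRegion).inter
    (Measure.set_prod_ae_eq (sqA_ae_eq p) (sqA_ae_eq q)))]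
  exact volume_crossingRegion_inter_openCell hp'.1 hq'.1
    (fun h => hp'.right_unique (h ▸ hq')) (fun h => hp'.left_unique (h ▸ hq'))

theorem sq_mul_measureReal_crossingRegion {n : ℕ}
    (P : Finpartition (Finset.univ : Finset (Fin n))) :
    (n : ℝ) ^ 2 * ((muPi P).prod (muPi P)).real crossingRegion =
      ∑ x ∈ arcs P ×ˢ arcs P, arcPairWeight x.1 x.2 := by
  have hnonneg : ∀ x : (Fin n × Fin n) × (Fin n × Fin n), 0 ≤ arcPairWeight x.1 x.2 / n ^ 4 :=
    fun x => by unfold arcPairWeight; positivity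
  rw [measureReal_def, muPi_prod_muPi_apply P measurableSet_crossingRegion,
    Finset.sum_congr rfl fun x hx => volume_crossingRegion_inter_sqA (Finset.mem_product.1 hx).1
      (Finset.mem_product.1 hx).2,
    ← ENNReal.ofReal_sum_of_nonneg fun x _ => hnonneg x, ENNReal.toReal_mul, ENNReal.toReal_mul,
    ENNReal.toReal_natCast, ENNReal.toReal_ofReal (Finset.sum_nonneg fun x _ => hnonneg x),
    Finset.mul_sum, Finset.mul_sum]
  refine Finset.sum_congr rfl fun x _ => ?_
  have : (n : ℝ) ≠ 0 := by exact_mod_cast x.1.1.pos.ne'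
  field_simp

theorem stmt16 (n : ℕ) (P : Finpartition (Finset.univ : Finset (Fin n))) :
    (crsP P : ℝ) =
      (n : ℝ) ^ 2 *
          (∫ q : (ℝ × ℝ) × (ℝ × ℝ),
            (if q.1.1 < q.2.1 ∧ q.2.1 < q.1.2 ∧ q.1.2 < q.2.2 then (1 : ℝ) else 0)
              ∂((muPi P).prod (muPi P)))
        - (dP P : ℝ) / 4 - (adjP P : ℝ) / 2 := by
  have hindicator : (fun q : (ℝ × ℝ) × (ℝ × ℝ) =>
      if q.1.1 < q.2.1 ∧ q.2.1 < q.1.2 ∧ q.1.2 < q.2.2 then (1 : ℝ) else 0) =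
      crossingRegion.indicator 1 := by
    funext q
    simp only [Set.indicator_apply, crossingRegion, Set.mem_ofPred, Pi.one_apply]
  rw [hindicator, integral_indicator_one measurableSet_crossingRegion,
    sq_mul_measureReal_crossingRegion, sum_arcPairWeight]
  ring
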